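/- Let R be a commutative ring. If γ_t(Γ(R)) = 3, then γ(Γ(R)) = 3. -/

import Mathlib

/-- Vertices of the zero-divisor graph: nonzero zero-divisors. -/
def zdVerts (R : Type*) [CommRing R] : Set R :=
  {x | x ≠ 0 ∧ ∃ y ≠ 0, x * y = 0}

/-- The set of all zero-divisors (including 0 when R is nontrivial). -/
def zdSet (R : Type*) [CommRing R] : Set R :=
  {x | ∃ y ≠ 0, x * y = 0}

/-- A dominating set of the zero-divisor graph Γ(R) (loops allowed: `x` is
adjacent to itself iff `x^2 = 0`). -/
def IsDomSet (R : Type*) [CommRing R] (X : Set R) : Prop :=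
  X ⊆ zdVerts R ∧ ∀ v ∈ zdVerts R, v ∉ X → ∃ x ∈ X, x * v = 0

/-- A total dominating set of Γ(R): every vertex has a neighbor in `X`
(possibly itself, if looped). -/
def IsTotDomSet (R : Type*) [CommRing R] (X : Set R) : Prop :=
  X ⊆ zdVerts R ∧ ∀ v ∈ zdVerts R, ∃ x ∈ X, x * v = 0

/-- The domination number γ(Γ(R)), as a cardinal. -/
noncomputable def domNum (R : Type*) [CommRing R] : Cardinal :=
  ⨅ X : {X : Set R // IsDomSet R X}, Cardinal.mk X.1

/-- The total domination number γ_t(Γ(R)), as a cardinal. -/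
noncomputable def totDomNum (R : Type*) [CommRing R] : Cardinal :=
  ⨅ X : {X : Set R // IsTotDomSet R X}, Cardinal.mk X.1

/-- The zero-divisor graph as a simple graph (loops discarded), used for girth. -/
def zdGraph (R : Type*) [CommRing R] : SimpleGraph R where
  Adj r s := r ≠ s ∧ r ≠ 0 ∧ s ≠ 0 ∧ r * s = 0
  symm := by constructor; intro r s h; exact ⟨h.1.symm, h.2.2.1, h.2.1, by rw [mul_comm]; exact h.2.2.2⟩
  loopless := by constructor; intro r h; exact h.1 rfl

/-!
Every total dominating set dominates, and `zdVerts R` is itself total dominating, so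
`γ ≤ γ_t = 3`. Conversely, a dominating set with fewer than three elements yields a total
dominating one of size at most two. It is empty or a pair `{a, b}`. If `ann a ⊆ ann b`, then
`b` together with a nonzero `s ∈ ann a` totally dominates. Otherwise pick
`s ∈ ann a \ ann b` and `t ∈ ann b \ ann a`: then `b * s` kills `a` and `ann b`, and `a * t`
kills `b` and `ann a`, so `{b * s, a * t}` totally dominates.
-/

lemma Set.eq_empty_or_exists_eq_pair_of_mk_lt_three {α : Type*} {s : Set α}
    (hs : Cardinal.mk s < 3) : s = ∅ ∨ ∃ a b, s = {a, b} := by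
  have hfin : s.Finite := Cardinal.lt_aleph0_iff_set_finite.1 (hs.trans (by norm_num))
  have hcard : s.ncard < 3 := by exact_mod_cast (Set.cast_ncard hfin).symm ▸ hs
  interval_cases h : s.ncard
  · exact .inl ((Set.ncard_eq_zero hfin).1 h)
  · obtain ⟨a, rfl⟩ := Set.ncard_eq_one.1 h
    exact .inr ⟨a, a, Set.pair_eq_singleton a |>.symm⟩
  · obtain ⟨a, b, -, rfl⟩ := Set.ncard_eq_two.1 h
    exact .inr ⟨a, b, rfl⟩

lemma Cardinal.mk_pair_le_two {α : Type*} (a b : α) : Cardinal.mk ({a, b} : Set α) ≤ 2 := by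
  refine Cardinal.mk_insert_le.trans ?_
  rw [Cardinal.mk_singleton]
  norm_num

section ZeroDivisorGraph

variable {R : Type*} [CommRing R]

lemma IsTotDomSet.isDomSet {X : Set R} (hX : IsTotDomSet R X) : IsDomSet R X :=
  ⟨hX.1, fun v hv _ => hX.2 v hv⟩

lemma isTotDomSet_zdVerts : IsTotDomSet R (zdVerts R) := by
  refine ⟨subset_rfl, fun v hv => ?_⟩
  obtain ⟨y, hy, hvy⟩ := hv.2
  exact ⟨y, ⟨hy, v, hv.1, by rw [mul_comm, hvy]⟩, by rw [mul_comm, hvy]⟩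

lemma totDomNum_le {X : Set R} (hX : IsTotDomSet R X) : totDomNum R ≤ Cardinal.mk X :=
  ciInf_le' _ (⟨X, hX⟩ : {X : Set R // IsTotDomSet R X})

lemma domNum_le_totDomNum : domNum R ≤ totDomNum R :=
  have : Nonempty {X : Set R // IsTotDomSet R X} := ⟨⟨_, isTotDomSet_zdVerts⟩⟩
  le_ciInf fun T => ciInf_le' _ (⟨T.1, T.2.isDomSet⟩ : {X : Set R // IsDomSet R X})

lemma IsDomSet.mul_eq_zero_or_mul_eq_zero {a b v : R} (hD : IsDomSet R {a, b})
    (hv : v ∈ zdVerts R) (hva : v ≠ a) (hvb : v ≠ b) : a * v = 0 ∨ b * v = 0 := by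
  simpa using hD.2 v hv (by simp [hva, hvb])

lemma isTotDomSet_empty_of_isDomSet_empty (hD : IsDomSet R ∅) : IsTotDomSet R ∅ :=
  ⟨hD.1, fun v hv => hD.2 v hv (Set.notMem_empty v)⟩

lemma isTotDomSet_pair_of_isDomSet_of_ann_subset {a b s : R} (hD : IsDomSet R {a, b})
    (hab : ∀ x, a * x = 0 → b * x = 0) (hs : s ≠ 0) (has : a * s = 0) :
    IsTotDomSet R {s, b} := by
  have ha := hD.1 (Set.mem_insert a {b})
  have hb := hD.1 (Set.mem_insert_of_mem a rfl)
  refine ⟨Set.insert_subset ⟨hs, a, ha.1, by rw [mul_comm, has]⟩ (by simpa using hb),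
    fun v hv => ?_⟩
  by_cases hva : v = a
  · exact ⟨s, by simp, by rw [hva, mul_comm, has]⟩
  by_cases hvb : v = b
  · exact ⟨s, by simp, by rw [hvb, mul_comm, hab s has]⟩
  refine ⟨b, by simp, ?_⟩
  rcases hD.mul_eq_zero_or_mul_eq_zero hv hva hvb with hav | hbv
  exacts [hab v hav, hbv]

lemma isTotDomSet_pair_mul_of_isDomSet {a b s t : R} (hD : IsDomSet R {a, b})
    (has : a * s = 0) (hbs : b * s ≠ 0) (hbt : b * t = 0) (hat : a * t ≠ 0) :
    IsTotDomSet R {b * s, a * t} := by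
  have ha := hD.1 (Set.mem_insert a {b})
  have hb := hD.1 (Set.mem_insert_of_mem a rfl)
  refine ⟨Set.insert_subset ⟨hbs, a, ha.1, by linear_combination b * has⟩
    (by simpa using ⟨hat, b, hb.1, by linear_combination a * hbt⟩), fun v hv => ?_⟩
  by_cases hva : v = a
  · exact ⟨b * s, by simp, by rw [hva]; linear_combination b * has⟩
  by_cases hvb : v = b
  · exact ⟨a * t, by simp, by rw [hvb]; linear_combination a * hbt⟩
  rcases hD.mul_eq_zero_or_mul_eq_zero hv hva hvb with hav | hbv
  · exact ⟨a * t, by simp, by linear_combination t * hav⟩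
  · exact ⟨b * s, by simp, by linear_combination s * hbv⟩

lemma exists_isTotDomSet_pair_of_isDomSet_pair {a b : R} (hD : IsDomSet R {a, b}) :
    ∃ x y, IsTotDomSet R {x, y} := by
  by_cases hab : ∀ x, a * x = 0 → b * x = 0
  · obtain ⟨s, hs, has⟩ := (hD.1 (Set.mem_insert a {b})).2
    exact ⟨s, b, isTotDomSet_pair_of_isDomSet_of_ann_subset hD hab hs has⟩
  by_cases hba : ∀ x, b * x = 0 → a * x = 0
  · rw [Set.pair_comm] at hD
    obtain ⟨t, ht, hbt⟩ := (hD.1 (Set.mem_insert b {a})).2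
    exact ⟨t, a, isTotDomSet_pair_of_isDomSet_of_ann_subset hD hba ht hbt⟩
  push Not at hab hba
  obtain ⟨s, has, hbs⟩ := hab
  obtain ⟨t, hbt, hat⟩ := hba
  exact ⟨b * s, a * t, isTotDomSet_pair_mul_of_isDomSet hD has hbs hbt hat⟩

lemma exists_isTotDomSet_mk_le_two_of_isDomSet {D : Set R} (hD : IsDomSet R D)
    (hDcard : Cardinal.mk D < 3) : ∃ T, IsTotDomSet R T ∧ Cardinal.mk T ≤ 2 := by
  obtain rfl | ⟨a, b, rfl⟩ := Set.eq_empty_or_exists_eq_pair_of_mk_lt_three hDcard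
  · exact ⟨∅, isTotDomSet_empty_of_isDomSet_empty hD, by simp⟩
  · obtain ⟨x, y, hT⟩ := exists_isTotDomSet_pair_of_isDomSet_pair hD
    exact ⟨{x, y}, hT, Cardinal.mk_pair_le_two x y⟩

lemma totDomNum_le_two_of_domNum_lt_three (h : domNum R < 3) : totDomNum R ≤ 2 := by
  have : Nonempty {X : Set R // IsDomSet R X} := ⟨⟨_, isTotDomSet_zdVerts.isDomSet⟩⟩
  obtain ⟨⟨D, hD⟩, hDcard⟩ := exists_lt_of_ciInf_lt h
  obtain ⟨T, hT, hTcard⟩ := exists_isTotDomSet_mk_le_two_of_isDomSet hD hDcard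
  exact (totDomNum_le hT).trans hTcard

end ZeroDivisorGraph

theorem stmt_15 (R : Type*) [CommRing R] (h : totDomNum R = 3) :
    domNum R = 3 := by
  refine le_antisymm (h ▸ domNum_le_totDomNum) (not_lt.1 fun hlt => ?_)
  have h32 : (3 : Cardinal) ≤ 2 := h ▸ totDomNum_le_two_of_domNum_lt_three hlt
  norm_num at h32
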